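/- arXiv:1108.4528 — 2 statements merged into one kernel-verified Lean document; each statement's English description precedes it below -/
import Mathlib

section
/- With notation as in the Clifford extension lemma: if τ additionally satisfies the closedness relation τ∘∂ = d∘τ for a degree-1 graded derivation ∂ of I and a degree-1 map d on the target, then the extension τ_σ satisfies τ_σ∘∂ + d∘τ_σ = 0, where ∂ is extended to I[σ] by ∂(T + σS) = ∂T - σ∂S. -/
/-- Closedness of the extended graded trace: if `τ ∘ ∂ = d ∘ τ`, and on the
Clifford extension one sets `τ_σ(T + σS) := τ(S)` and
`∂_σ(T + σS) := ∂T - σ∂S` (encoding `T + σS` as the pair `(T, S)`), then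
`τ_σ ∘ ∂_σ + d ∘ τ_σ = 0`. -/
theorem stmt_11 {A M : Type*} [Ring A] [AddCommGroup M]
    (τ : A →+ M) (der : A →+ A) (d : M →+ M)
    (hclosed : ∀ a : A, τ (der a) = d (τ a))
    (τσ : A × A → M) (hτσ : ∀ T S : A, τσ (T, S) = τ S)
    (derσ : A × A → A × A) (hderσ : ∀ T S : A, derσ (T, S) = (der T, -der S)) :
    ∀ T S : A, τσ (derσ (T, S)) + d (τσ (T, S)) = 0 := by
  intro T S
  rw [hderσ, hτσ, hτσ, map_neg, hclosed, neg_add_cancel]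
end

section
/- Let A be an algebra and let ⟨⟨·,…,·⟩⟩ₙ be multilinear functionals (n+1 arguments, n ≥ 0) on A with values in a vector space, satisfying: (i) the insertion relation Σ_{i=0}^{n} ⟨⟨A₀,…,A_i, 1, A_{i+1},…,A_n⟩⟩_{n+1} = ⟨⟨A₀,…,A_n⟩⟩ₙ for all A_j; define B on cochains ψ_{n+1}(f₀,…,f_{n+1}) = ⟨⟨f₀,[𝔹,f₁],…,[𝔹,f_{n+1}]⟩⟩ by the cyclic sum formula for a derivation-like bracket [𝔹,·]. Then (Bψ_{n+1})(f₀,…,f_n) = ⟨⟨[𝔹,f₀],[𝔹,f₁],…,[𝔹,f_n]⟩⟩, provided the functionals are graded-cyclically invariant. -/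
/-!
Write `g = (δf₀, …, δfₙ)`. The `j`-th term of `Bψ_{n+1}` evaluates the functional on
`(1, g_j, …, g_n, g_0, …, g_{j-1})`, a cyclic rotation of the tuple obtained from `g` by
inserting `1` at position `j` (indices mod `n + 1`). Since `1` has degree `0` and every `g_i`
degree `1`, graded cyclic invariance identifies the two up to `(-1)^{j(n+1-j)}`, and this
cancels the sign `(-1)^{nj}` of `B` because `j(j-1)` is even. Summing over `j`, the insertion
relation collapses the result to `⟨⟨δf₀, …, δfₙ⟩⟩`.
-/

open Finset

theorem neg_one_pow_mul_succ_eq {k n : ℕ} (h : k ≤ n) :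
    (-1 : ℤ) ^ (n * (k + 1)) = (-1) ^ ((k + 1) * (n - k)) := by
  obtain ⟨d, rfl⟩ := Nat.exists_eq_add_of_le h
  rw [Nat.add_sub_cancel_left, show (k + d) * (k + 1) = k * (k + 1) + (k + 1) * d by ring,
    pow_add, (Nat.even_mul_succ_self k).neg_one_pow, one_mul]

namespace Fin

variable {n : ℕ} {α : Type*}

theorem val_add_one_add (k m : Fin (n + 1)) :
    ((k + 1 + m : Fin (n + 1)) : ℕ) = (k + 1 + m) % (n + 1) := by
  simp [val_add, Nat.add_mod]

theorem succ_add_succ_eq_succAbove (k m : Fin (n + 1)) :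
    m.succ + k.succ = k.succ.succAbove (k + 1 + m) := by
  have hk := k.isLt
  have hm := m.isLt
  have hsum := val_add_one_add k m
  rcases lt_or_ge ((k : ℕ) + 1 + m) (n + 1) with h | h
  · rw [Nat.mod_eq_of_lt h] at hsum
    rw [succAbove_of_lt_succ _ _ (by rw [lt_def, val_succ, val_succ, hsum]; omega)]
    ext
    rw [val_succ, hsum, val_add_eq_ite, val_succ, val_succ]
    split_ifs <;> omega
  · rw [Nat.mod_eq_sub_mod h, Nat.mod_eq_of_lt (by omega)] at hsum
    rw [succAbove_of_castSucc_lt _ _ (by rw [lt_def, val_castSucc, val_succ, hsum]; omega)]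
    ext
    rw [val_castSucc, hsum, val_add_eq_ite, val_succ, val_succ]
    split_ifs <;> omega

theorem insertNth_succ_apply_add_succ (x : α) (g : Fin (n + 1) → α) (k : Fin (n + 1))
    (m : Fin (n + 2)) :
    insertNth (α := fun _ => α) k.succ x g (m + k.succ) =
      cons (α := fun _ => α) x (fun m => g (k + 1 + m)) m := by
  cases m using Fin.cases with
  | zero => simp
  | succ m => rw [succ_add_succ_eq_succAbove, insertNth_apply_succAbove, cons_succ]

theorem dite_eq_zero_pred_eq_cons (x : α) (g : Fin (n + 1) → α) :
    (fun m : Fin (n + 2) => if h : m = 0 then x else g (m.pred h)) =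
      cons (α := fun _ => α) x g := by
  ext m
  cases m using Fin.cases <;> simp

theorem insertNth_succ_eq_dite (x : α) (g : Fin (n + 1) → α) (i : Fin (n + 1)) :
    insertNth (α := fun _ => α) i.succ x g = fun m : Fin (n + 2) =>
        if h : (m : ℕ) ≤ (i : ℕ) then g ⟨(m : ℕ), Nat.lt_of_le_of_lt h i.isLt⟩
        else if (m : ℕ) = (i : ℕ) + 1 then x
        else g ⟨(m : ℕ) - 1, by omega⟩ := by
  ext m
  rcases eq_self_or_eq_succAbove i.succ m with rfl | ⟨j, rfl⟩
  · simp
  · rw [insertNth_apply_succAbove]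
    rcases lt_or_ge j.castSucc i.succ with h | h
    · rw [succAbove_of_castSucc_lt _ _ h]
      rw [lt_def, val_castSucc, val_succ] at h
      simp [Nat.lt_succ_iff.mp h]
    · rw [succAbove_of_le_castSucc _ _ h]
      rw [le_def, val_castSucc, val_succ] at h
      simp [show ¬ (j : ℕ) + 1 ≤ i by omega, show (j : ℕ) ≠ i by omega]

theorem insertNth_apply_mem_ite {s t : Set α} {x : α} {g : Fin n → α} (hx : x ∈ s)
    (hg : ∀ j, g j ∈ t) (p m : Fin (n + 1)) :
    insertNth (α := fun _ => α) p x g m ∈ if m = p then s else t := by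
  rcases eq_self_or_eq_succAbove p m with rfl | ⟨j, rfl⟩
  · simpa using hx
  · simpa [succAbove_ne] using hg j

theorem sum_filter_val_lt_ite_eq {N : ℕ} (p : Fin N) :
    ∑ m ∈ univ.filter (fun m : Fin N => (m : ℕ) < p), (if m = p then 0 else 1) = (p : ℕ) := by
  rw [sum_ite, sum_const_zero, zero_add, ← card_eq_sum_ones, filter_filter]
  convert card_Iio p using 2
  ext m
  simp only [mem_filter, mem_univ, true_and, mem_Iio, lt_def, Fin.ext_iff]
  omega

theorem sum_filter_val_le_ite_eq {N : ℕ} (p : Fin (N + 1)) :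
    ∑ m ∈ univ.filter (fun m : Fin (N + 1) => (p : ℕ) ≤ m), (if m = p then 0 else 1) = N - p := by
  rw [sum_ite, sum_const_zero, zero_add, ← card_eq_sum_ones, filter_filter]
  convert card_Ioi p using 2
  · ext m
    simp only [mem_filter, mem_univ, true_and, mem_Ioi, lt_def, Fin.ext_iff]
    omega
  · exact (Nat.add_sub_cancel N 1).symm


theorem neg_one_pow_mul_val_add_one (k : Fin (n + 1)) :
    (-1 : ℤ) ^ (n * ((k + 1 : Fin (n + 1)) : ℕ)) = (-1) ^ (((k : ℕ) + 1) * (n - k)) := by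
  rw [val_add_one]
  split_ifs with hk
  · simp [hk]
  · exact neg_one_pow_mul_succ_eq (Nat.le_of_lt_succ k.isLt)

end Fin

/-- Connes' `B`-operator computation for JLO-type cochains. `F n` plays the
role of the multilinear functional `⟨⟨A₀,…,A_n⟩⟩ₙ`, `δ` of the bracket
`[𝔹,·]` (an odd map, sending everything to degree-1 homogeneous elements),
and the cochain is `ψ_{n}(f₀,…,f_n) = F n (f₀, δf₁, …, δf_n)` for degree-0
entries `f_j`. Assuming graded cyclic invariance and the insertion relation
`Σ_i ⟨⟨A₀,…,A_i,1,A_{i+1},…,A_n⟩⟩ = ⟨⟨A₀,…,A_n⟩⟩`, Connes' operator `B`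
applied to `ψ_{n+1}` gives `(Bψ_{n+1})(f₀,…,f_n) = ⟨⟨δf₀, δf₁, …, δf_n⟩⟩`. -/
theorem stmt_17 {A M : Type*} [Monoid A] [AddCommGroup M]
    (homog : ℕ → Set A)
    (F : ∀ n : ℕ, (Fin (n+1) → A) → M)
    (δ : A → A)
    (h1 : (1 : A) ∈ homog 0)
    (hδ : ∀ a : A, δ a ∈ homog 1)
    -- graded cyclic invariance:
    (hcyc : ∀ (n : ℕ) (g : Fin (n+1) → A) (dg : Fin (n+1) → ℕ),
      (∀ m, g m ∈ homog (dg m)) → ∀ i : Fin (n+1),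
      F n g = ((-1 : ℤ) ^
          ((∑ m ∈ univ.filter (fun m : Fin (n+1) => (m : ℕ) < (i : ℕ)), dg m) *
           (∑ m ∈ univ.filter (fun m : Fin (n+1) => (i : ℕ) ≤ (m : ℕ)), dg m))) •
        F n (fun m => g (m + i)))
    -- insertion of the unit:
    (hins : ∀ (n : ℕ) (g : Fin (n+1) → A),
      (∑ i : Fin (n+1), F (n+1) (fun m : Fin (n+2) =>
        if h : (m : ℕ) ≤ (i : ℕ) then g ⟨(m : ℕ), Nat.lt_of_le_of_lt h i.isLt⟩
        else if (m : ℕ) = (i : ℕ) + 1 then 1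
        else g ⟨(m : ℕ) - 1, by have := m.isLt; omega⟩)) = F n g) :
    ∀ (n : ℕ) (f : Fin (n+1) → A),
      (∑ j : Fin (n+1), ((-1 : ℤ) ^ (n * (j : ℕ))) •
        F (n+1) (fun m : Fin (n+2) =>
          if h : m = 0 then 1 else δ (f (j + m.pred h))))
      = F n (fun m => δ (f m)) := by
  intro n f
  set g : Fin (n + 1) → A := fun m => δ (f m)
  rw [← hins n g]
  refine (Fintype.sum_equiv (Equiv.addRight 1) _ _ fun k => ?_).symm
  simp only [← Fin.insertNth_succ_eq_dite, Equiv.coe_addRight]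
  rw [Fin.dite_eq_zero_pred_eq_cons (1 : A) (fun m => g (k + 1 + m))]
  have hdeg : ∀ m, Fin.insertNth (α := fun _ => A) k.succ 1 g m ∈
      homog (if m = k.succ then 0 else 1) := fun m => by
    rw [apply_ite homog]
    exact Fin.insertNth_apply_mem_ite h1 (fun j => hδ (f j)) k.succ m
  rw [hcyc (n + 1) _ _ hdeg k.succ, Fin.sum_filter_val_lt_ite_eq, Fin.sum_filter_val_le_ite_eq,
    funext (Fin.insertNth_succ_apply_add_succ (1 : A) g k), Fin.neg_one_pow_mul_val_add_one,
    Fin.val_succ, Nat.add_sub_add_right]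
end
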